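/- arXiv:1105.2137 — 2 statements merged into one kernel-verified Lean document; each statement's English description precedes it below -/
import Mathlib

section
/- Strong law of large numbers for renewal processes: let J_1, J_2, … be i.i.d. positive random variables with finite mean μ = E[J_1] < ∞, T_n = Σ_{i=1}^n J_i, and N(t) = max{n : T_n ≤ t}. Then N(t)/t → 1/μ almost surely as t → ∞. -/
open MeasureTheory ProbabilityTheory Filter
open scoped ProbabilityTheory ENNReal

/-- The epoch `T_n = ∑_{i=1}^n J_i` (with `T_0 = 0`); here `J i` stands for `J_{i+1}`. -/
noncomputable def epoch {Ω : Type*} (J : ℕ → Ω → ℝ) (n : ℕ) (ω : Ω) : ℝ :=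
  ∑ i ∈ Finset.range n, J i ω

/-- The counting process `N(t) = max {n : T_n ≤ t}` (valued in `ℕ∞`). -/
noncomputable def countingProcess {Ω : Type*} (J : ℕ → Ω → ℝ) (t : ℝ) (ω : Ω) : ℕ∞ :=
  ⨆ (n : ℕ) (_ : epoch J n ω ≤ t), (n : ℕ∞)

open scoped Topology

/-!
By the strong law of large numbers, almost surely `T_n / n → μ`. The rest is deterministic:
for any real sequence with `T_n / n → μ > 0` we have `T_n → ∞`, so `N(t)` is finite and tends
to infinity, and `T_{N(t)} ≤ t < T_{N(t)+1}` squeezes `N(t) / t` between `N(t) / T_{N(t)+1}`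
and `N(t) / T_{N(t)}`, both of which tend to `1 / μ`.
-/

/-- `sSup` makes this `0` when no index qualifies (as is the `ℕ∞`-valued supremum in
`countingProcess`), and junk when the qualifying indices are unbounded. -/
noncomputable def lastIndexLE (f : ℕ → ℝ) (t : ℝ) : ℕ :=
  sSup {n | f n ≤ t}

section Deterministic

variable {f : ℕ → ℝ}

theorem tendsto_atTop_of_tendsto_div_natCast {μ : ℝ} (hμ : 0 < μ)
    (h : Tendsto (fun n : ℕ => f n / n) atTop (𝓝 μ)) : Tendsto f atTop atTop :=
  (h.pos_mul_atTop hμ tendsto_natCast_atTop_atTop).congr' <| by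
    filter_upwards [eventually_ne_atTop 0] with n hn
    field_simp

theorem bddAbove_setOf_apply_le (hf : Tendsto f atTop atTop) (t : ℝ) :
    BddAbove {n | f n ≤ t} := by
  obtain ⟨m, hm⟩ := (hf.eventually_gt_atTop t).exists_forall_of_atTop
  exact ⟨m, fun n hn => not_lt.1 fun hmn => (hm n hmn.le).not_ge hn⟩

theorem iSup_natCast_eq_lastIndexLE (hf : Tendsto f atTop atTop) (t : ℝ) :
    (⨆ (n : ℕ) (_ : f n ≤ t), (n : ℕ∞)) = lastIndexLE f t :=
  (ENat.natCast_sSup (bddAbove_setOf_apply_le hf t)).symm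

theorem lt_apply_lastIndexLE_succ (hf : Tendsto f atTop atTop) (t : ℝ) :
    t < f (lastIndexLE f t + 1) :=
  not_le.1 fun h => (Nat.lt_succ_self _).not_ge (le_csSup (bddAbove_setOf_apply_le hf t) h)

theorem apply_lastIndexLE_le (hf : Tendsto f atTop atTop) {t : ℝ} (ht : f 0 ≤ t) :
    f (lastIndexLE f t) ≤ t :=
  Nat.sSup_mem ⟨0, ht⟩ (bddAbove_setOf_apply_le hf t)

theorem tendsto_lastIndexLE (hf : Tendsto f atTop atTop) :
    Tendsto (lastIndexLE f) atTop atTop :=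
  tendsto_atTop.2 fun m =>
    (eventually_ge_atTop (f m)).mono fun t ht => le_csSup (bddAbove_setOf_apply_le hf t) ht

theorem tendsto_lastIndexLE_div_self {μ : ℝ} (hμ : 0 < μ)
    (h : Tendsto (fun n : ℕ => f n / n) atTop (𝓝 μ)) :
    Tendsto (fun t => (lastIndexLE f t : ℝ) / t) atTop (𝓝 μ⁻¹) := by
  have hf := tendsto_atTop_of_tendsto_div_natCast hμ h
  have hN := tendsto_lastIndexLE hf
  have upper : Tendsto (fun n : ℕ => (n : ℝ) / f n) atTop (𝓝 μ⁻¹) :=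
    (h.inv₀ hμ.ne').congr fun n => inv_div _ _
  have lower : Tendsto (fun n : ℕ => (n : ℝ) / f (n + 1)) atTop (𝓝 μ⁻¹) := by
    have h := (upper.comp (tendsto_add_atTop_nat 1)).mul (tendsto_natCast_div_add_atTop (1 : ℝ))
    rw [mul_one] at h
    refine h.congr fun n => ?_
    have hn : (n : ℝ) + 1 ≠ 0 := by positivity
    simp only [Function.comp_apply, Nat.cast_add, Nat.cast_one]
    rw [div_mul_div_comm, mul_comm, mul_div_mul_right _ _ hn]
  have hpos : ∀ᶠ t in atTop, 0 < f (lastIndexLE f t) := (hf.comp hN).eventually_gt_atTop 0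
  refine tendsto_of_tendsto_of_tendsto_of_le_of_le' (lower.comp hN) (upper.comp hN) ?_ ?_
  · filter_upwards [hpos, eventually_ge_atTop (f 0)] with t hpos ht
    exact div_le_div_of_nonneg_left (Nat.cast_nonneg _)
      (hpos.trans_le (apply_lastIndexLE_le hf ht)) (lt_apply_lastIndexLE_succ hf t).le
  · filter_upwards [hpos, eventually_ge_atTop (f 0)] with t hpos ht
    exact div_le_div_of_nonneg_left (Nat.cast_nonneg _) hpos (apply_lastIndexLE_le hf ht)

end Deterministic

theorem renewal_strong_law_general {Ω : Type*} [MeasureSpace Ω]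
    (J : ℕ → Ω → ℝ)
    (hindep : iIndepFun J ℙ)
    (hident : ∀ i, IdentDistrib (J i) (J 0) ℙ ℙ)
    (hint : Integrable (J 0) ℙ)
    (μ : ℝ) (hμ : μ = ∫ ω, J 0 ω ∂ℙ) (hμ_pos : 0 < μ) :
    ∀ᵐ ω ∂ℙ, Tendsto (fun t : ℝ => ((countingProcess J t ω : ℝ≥0∞)).toReal / t)
      atTop (nhds (1 / μ)) := by
  filter_upwards [strong_law_ae_real J hint (fun i j hij => hindep.indepFun hij) hident]
    with ω hω
  have hT : Tendsto (fun n : ℕ => epoch J n ω / n) atTop (𝓝 μ) := by rw [hμ]; exact hω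
  have hT_top := tendsto_atTop_of_tendsto_div_natCast hμ_pos hT
  rw [one_div]
  refine (tendsto_lastIndexLE_div_self hμ_pos hT).congr fun t => ?_
  rw [countingProcess, iSup_natCast_eq_lastIndexLE hT_top]
  rfl

/-- Strong law of large numbers for renewal processes: if `J_1, J_2, …` are i.i.d.
strictly positive integrable random variables with mean `μ = E[J_1] ∈ (0,∞)`, then
`N(t)/t → 1/μ` almost surely as `t → ∞`. -/
theorem renewal_strong_law {Ω : Type*} [MeasureSpace Ω]
    [IsProbabilityMeasure (ℙ : Measure Ω)]
    (J : ℕ → Ω → ℝ)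
    (hmeas : ∀ i, Measurable (J i))
    (hindep : iIndepFun J ℙ)
    (hident : ∀ i, IdentDistrib (J i) (J 0) ℙ ℙ)
    (hpos : ∀ i ω, 0 < J i ω)
    (hint : Integrable (J 0) ℙ)
    (μ : ℝ) (hμ : μ = ∫ ω, J 0 ω ∂ℙ) (hμ_pos : 0 < μ) :
    ∀ᵐ ω ∂ℙ, Tendsto (fun t : ℝ => ((countingProcess J t ω : ℝ≥0∞)).toReal / t)
      atTop (nhds (1 / μ)) :=
  renewal_strong_law_general J hindep hident hint μ hμ hμ_pos
end

section
/- Elementary renewal theorem: let J_1, J_2, … be i.i.d. positive random variables with finite mean μ = E[J_1] < ∞, T_n = Σ_{i=1}^n J_i, N(t) = max{n : T_n ≤ t}, and H(t) = E[N(t)]. Then H(t)/t → 1/μ as t → ∞. -/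
/-
Wald's identity `E[T_{N(t)+1}] = μ (H(t) + 1)` holds because the event `{Tᵢ ≤ t}` depends only
on `J_0, …, J_{i-1}` and is therefore independent of `Jᵢ`. Since `T_{N(t)+1} > t`, it gives
`t ≤ μ (H(t) + 1)`. For the other direction truncate: `Jᵢ ∧ b` has a larger counting process,
and its first passage overshoots `t` by at most `b`, so `E[J_0 ∧ b] (H(t) + 1) ≤ t + b`. Letting
`b → ∞` (monotone convergence) the truncated means approach `μ`, which yields
`limsup H(t)/t ≤ 1/μ`.
-/

open MeasureTheory ProbabilityTheory Filter
open scoped ProbabilityTheory ENNReal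

/-- The renewal function `H(t) = E[N(t)]`. -/
noncomputable def renewalFunction {Ω : Type*} [MeasureSpace Ω] (J : ℕ → Ω → ℝ) (t : ℝ) : ℝ :=
  (∫⁻ ω, (countingProcess J t ω : ℝ≥0∞) ∂ℙ).toReal

/-- `T_{N(t)+1}`, written as `∑ᵢ Jᵢ 1{Tᵢ ≤ t}` (the two agree when `N(t) < ∞`). -/
noncomputable def firstPassage {Ω : Type*} (K : ℕ → Ω → ℝ) (t : ℝ) (ω : Ω) : ℝ≥0∞ :=
  ∑' i, {ω | epoch K i ω ≤ t}.indicator (fun ω => ENNReal.ofReal (K i ω)) ω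

section Deterministic

variable {Ω : Type*} {K : ℕ → Ω → ℝ} {t : ℝ} {ω : Ω}

lemma epoch_zero : epoch K 0 ω = 0 := Finset.sum_range_zero _

lemma epoch_succ (n : ℕ) : epoch K (n + 1) ω = epoch K n ω + K n ω := Finset.sum_range_succ _ _

lemma epoch_mono (hK : ∀ i, 0 ≤ K i ω) : Monotone (epoch K · ω) := fun _ _ hmn =>
  Finset.sum_le_sum_of_subset_of_nonneg (Finset.range_subset_range.2 hmn) fun i _ _ => hK i

lemma epoch_le_iff_le_countingProcess (hK : ∀ i, 0 ≤ K i ω) (ht : 0 ≤ t) (n : ℕ) :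
    epoch K n ω ≤ t ↔ (n : ℕ∞) ≤ countingProcess K t ω := by
  refine ⟨fun hn => le_iSup₂ (f := fun (m : ℕ) (_ : epoch K m ω ≤ t) => (m : ℕ∞)) n hn,
    fun hn => ?_⟩
  by_contra hnt
  have hn0 : n ≠ 0 := by rintro rfl; exact hnt (epoch_zero.trans_le ht)
  have hlt : countingProcess K t ω ≤ (n - 1 : ℕ) := iSup₂_le fun m hm => by
    have : m < n := lt_of_not_ge fun hnm => hnt ((epoch_mono hK hnm).trans hm)
    exact_mod_cast Nat.le_sub_one_of_lt this
  have := hn.trans hlt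
  norm_cast at this
  omega

lemma countingProcess_add_one_eq_tsum (hK : ∀ i, 0 ≤ K i ω) (ht : 0 ≤ t) :
    (countingProcess K t ω : ℝ≥0∞) + 1 = ∑' i, {ω | epoch K i ω ≤ t}.indicator 1 ω := by
  simp_rw [Set.indicator_apply, Set.mem_ofPred_eq, epoch_le_iff_le_countingProcess hK ht]
  induction countingProcess K t ω using ENat.recTopCoe with
  | top => simp
  | coe m =>
    rw [tsum_eq_sum (s := Finset.range (m + 1)) fun i hi => by simp_all,
      Finset.sum_congr rfl fun i hi =>
        if_pos (Nat.cast_le.2 (Nat.lt_succ_iff.1 (Finset.mem_range.1 hi)))]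
    simp

lemma firstPassage_eq_epoch_succ (hK : ∀ i, 0 ≤ K i ω) (ht : 0 ≤ t) {m : ℕ}
    (hm : countingProcess K t ω = m) :
    firstPassage K t ω = ENNReal.ofReal (epoch K (m + 1) ω) := by
  simp_rw [firstPassage, Set.indicator_apply, Set.mem_ofPred_eq,
    epoch_le_iff_le_countingProcess hK ht, hm, Nat.cast_le]
  rw [tsum_eq_sum (s := Finset.range (m + 1)) fun i hi => by simp_all,
    epoch, ENNReal.ofReal_sum_of_nonneg fun i _ => hK i]
  exact Finset.sum_congr rfl fun i hi => if_pos (Nat.lt_succ_iff.1 (Finset.mem_range.1 hi))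

lemma firstPassage_le_of_countingProcess_eq_top (hK : ∀ i, 0 ≤ K i ω) (ht : 0 ≤ t)
    (htop : countingProcess K t ω = ⊤) : firstPassage K t ω ≤ ENNReal.ofReal t := by
  simp_rw [firstPassage, Set.indicator_apply, Set.mem_ofPred_eq,
    epoch_le_iff_le_countingProcess hK ht, htop, le_top, if_true, ENNReal.tsum_eq_iSup_nat]
  refine iSup_le fun n => ?_
  rw [← ENNReal.ofReal_sum_of_nonneg fun i _ => hK i]
  exact ENNReal.ofReal_le_ofReal ((epoch_le_iff_le_countingProcess hK ht n).2 (htop ▸ le_top))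

lemma le_firstPassage (hK : ∀ i, 0 ≤ K i ω) (ht : 0 ≤ t) (hfin : countingProcess K t ω ≠ ⊤) :
    ENNReal.ofReal t ≤ firstPassage K t ω := by
  obtain ⟨m, hm⟩ := ENat.ne_top_iff_exists.1 hfin
  rw [firstPassage_eq_epoch_succ hK ht hm.symm]
  refine ENNReal.ofReal_le_ofReal (le_of_lt (not_le.1 fun h => ?_))
  have := (epoch_le_iff_le_countingProcess hK ht _).1 h
  rw [← hm] at this
  norm_cast at this
  omega

lemma firstPassage_le (hK : ∀ i, 0 ≤ K i ω) {b : ℝ} (hKb : ∀ i, K i ω ≤ b) (ht : 0 ≤ t) :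
    firstPassage K t ω ≤ ENNReal.ofReal (t + b) := by
  induction hN : countingProcess K t ω using ENat.recTopCoe with
  | top =>
    exact (firstPassage_le_of_countingProcess_eq_top hK ht hN).trans
      (ENNReal.ofReal_le_ofReal (by linarith [hK 0, hKb 0]))
  | coe m =>
    rw [firstPassage_eq_epoch_succ hK ht hN, epoch_succ]
    exact ENNReal.ofReal_le_ofReal (add_le_add
      ((epoch_le_iff_le_countingProcess hK ht m).2 hN.ge) (hKb m))

lemma countingProcess_anti {L : ℕ → Ω → ℝ} (hKL : ∀ i, K i ω ≤ L i ω) :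
    countingProcess L t ω ≤ countingProcess K t ω :=
  iSup₂_le fun n hn => le_iSup₂ (f := fun (m : ℕ) (_ : epoch K m ω ≤ t) => (m : ℕ∞)) n
    ((Finset.sum_le_sum fun i _ => hKL i).trans hn)

end Deterministic

section Wald

variable {Ω : Type*} [MeasurableSpace Ω] {P : Measure Ω} {K : ℕ → Ω → ℝ} {t : ℝ}

lemma measurable_epoch (hKm : ∀ i, Measurable (K i)) (n : ℕ) : Measurable (epoch K n) :=
  Finset.measurable_sum _ fun i _ => hKm i

lemma measurableSet_epoch_le (hKm : ∀ i, Measurable (K i)) (n : ℕ) :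
    MeasurableSet {ω | epoch K n ω ≤ t} :=
  measurableSet_le (measurable_epoch hKm n) measurable_const

lemma measurable_countingProcess (hKm : ∀ i, Measurable (K i)) (hK : ∀ i ω, 0 ≤ K i ω)
    (ht : 0 ≤ t) : Measurable fun ω => (countingProcess K t ω : ℝ≥0∞) := by
  have h : (fun ω => (countingProcess K t ω : ℝ≥0∞))
      = fun ω => (∑' i, {ω | epoch K i ω ≤ t}.indicator 1 ω) - 1 := by
    ext ω
    rw [← countingProcess_add_one_eq_tsum (hK · ω) ht,
      ENNReal.add_sub_cancel_right ENNReal.one_ne_top]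
  rw [h]
  exact (Measurable.tsum fun i =>
    measurable_const.indicator (measurableSet_epoch_le hKm i)).sub measurable_const

lemma lintegral_countingProcess_add_one [IsProbabilityMeasure P] (hKm : ∀ i, Measurable (K i))
    (hK : ∀ i ω, 0 ≤ K i ω) (ht : 0 ≤ t) :
    ∫⁻ ω, (countingProcess K t ω : ℝ≥0∞) ∂P + 1 = ∑' i, P {ω | epoch K i ω ≤ t} := by
  have hind : ∀ i, Measurable ({ω | epoch K i ω ≤ t}.indicator (1 : Ω → ℝ≥0∞)) := fun i =>
    measurable_const.indicator (measurableSet_epoch_le hKm i)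
  calc ∫⁻ ω, (countingProcess K t ω : ℝ≥0∞) ∂P + 1
      = ∫⁻ ω, ((countingProcess K t ω : ℝ≥0∞) + 1) ∂P := by
        rw [lintegral_add_right _ measurable_const, lintegral_one, measure_univ]
    _ = ∫⁻ ω, ∑' i, {ω | epoch K i ω ≤ t}.indicator 1 ω ∂P :=
        lintegral_congr fun ω => countingProcess_add_one_eq_tsum (hK · ω) ht
    _ = ∑' i, P {ω | epoch K i ω ≤ t} := by
        simp_rw [lintegral_tsum fun i => (hind i).aemeasurable,
          lintegral_indicator_one (measurableSet_epoch_le hKm _)]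

lemma lintegral_indicator_epoch_le (hKm : ∀ i, Measurable (K i)) (hindep : iIndepFun K P)
    (i : ℕ) :
    ∫⁻ ω, {ω | epoch K i ω ≤ t}.indicator (fun ω => ENNReal.ofReal (K i ω)) ω ∂P
      = (∫⁻ ω, ENNReal.ofReal (K i ω) ∂P) * P {ω | epoch K i ω ≤ t} := by
  have hsum : epoch K i = ∑ j ∈ Finset.range i, K j := by
    ext ω; simp [epoch, Finset.sum_apply]
  have h : IndepFun (fun ω => ENNReal.ofReal (K i ω))
      (fun ω => (Set.Iic t).indicator (1 : ℝ → ℝ≥0∞) (epoch K i ω)) P := by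
    rw [hsum]
    exact (hindep.indepFun_finsetSum_of_notMem hKm Finset.notMem_range_self).symm.comp
      ENNReal.measurable_ofReal (measurable_const.indicator measurableSet_Iic)
  have hmeas : Measurable fun ω => (Set.Iic t).indicator (1 : ℝ → ℝ≥0∞) (epoch K i ω) :=
    (measurable_const.indicator measurableSet_Iic).comp (measurable_epoch hKm i)
  calc ∫⁻ ω, {ω | epoch K i ω ≤ t}.indicator (fun ω => ENNReal.ofReal (K i ω)) ω ∂P
      = ∫⁻ ω, ENNReal.ofReal (K i ω) * (Set.Iic t).indicator 1 (epoch K i ω) ∂P := by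
        congr with ω
        by_cases hω : epoch K i ω ≤ t <;> simp [hω]
    _ = (∫⁻ ω, ENNReal.ofReal (K i ω) ∂P) * P {ω | epoch K i ω ≤ t} := by
        rw [lintegral_mul_eq_lintegral_mul_lintegral_of_indepFun''
          (hKm i).ennreal_ofReal.aemeasurable hmeas.aemeasurable h,
          ← lintegral_indicator_one (measurableSet_epoch_le hKm i)]
        rfl

lemma lintegral_firstPassage (hKm : ∀ i, Measurable (K i)) (hK : ∀ i ω, 0 ≤ K i ω)
    (hindep : iIndepFun K P) (hident : ∀ i, IdentDistrib (K i) (K 0) P P) (ht : 0 ≤ t) :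
    ∫⁻ ω, firstPassage K t ω ∂P
      = (∫⁻ ω, ENNReal.ofReal (K 0 ω) ∂P) * (∫⁻ ω, (countingProcess K t ω : ℝ≥0∞) ∂P + 1) := by
  have := hindep.isProbabilityMeasure
  simp only [firstPassage]
  rw [lintegral_countingProcess_add_one hKm hK ht, ← ENNReal.tsum_mul_left,
    lintegral_tsum fun i =>
      ((hKm i).ennreal_ofReal.indicator (measurableSet_epoch_le hKm i)).aemeasurable]
  congr with i
  rw [lintegral_indicator_epoch_le hKm hindep i]
  exact congrArg (· * _) ((hident i).comp ENNReal.measurable_ofReal).lintegral_eq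

lemma ofReal_le_mean_mul_lintegral_countingProcess (hKm : ∀ i, Measurable (K i))
    (hK : ∀ i ω, 0 ≤ K i ω) (hindep : iIndepFun K P) (hident : ∀ i, IdentDistrib (K i) (K 0) P P)
    (ht : 0 ≤ t) (hfin : ∫⁻ ω, (countingProcess K t ω : ℝ≥0∞) ∂P ≠ ⊤) :
    ENNReal.ofReal t
      ≤ (∫⁻ ω, ENNReal.ofReal (K 0 ω) ∂P) * (∫⁻ ω, (countingProcess K t ω : ℝ≥0∞) ∂P + 1) := by
  have := hindep.isProbabilityMeasure
  rw [← lintegral_firstPassage hKm hK hindep hident ht]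
  calc ENNReal.ofReal t = ∫⁻ _, ENNReal.ofReal t ∂P := by simp
    _ ≤ ∫⁻ ω, firstPassage K t ω ∂P := by
      refine lintegral_mono_ae ?_
      filter_upwards [ae_lt_top (measurable_countingProcess hKm hK ht) hfin] with ω hω
      exact le_firstPassage (hK · ω) ht (by simpa using hω.ne)

lemma mean_mul_lintegral_countingProcess_le (hKm : ∀ i, Measurable (K i))
    (hK : ∀ i ω, 0 ≤ K i ω) (hindep : iIndepFun K P) (hident : ∀ i, IdentDistrib (K i) (K 0) P P)
    {b : ℝ} (hKb : ∀ i ω, K i ω ≤ b) (ht : 0 ≤ t) :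
    (∫⁻ ω, ENNReal.ofReal (K 0 ω) ∂P) * (∫⁻ ω, (countingProcess K t ω : ℝ≥0∞) ∂P + 1)
      ≤ ENNReal.ofReal (t + b) := by
  have := hindep.isProbabilityMeasure
  rw [← lintegral_firstPassage hKm hK hindep hident ht]
  calc ∫⁻ ω, firstPassage K t ω ∂P ≤ ∫⁻ _, ENNReal.ofReal (t + b) ∂P :=
        lintegral_mono fun ω => firstPassage_le (hK · ω) (hKb · ω) ht
    _ = ENNReal.ofReal (t + b) := by simp

lemma exists_lt_lintegral_ofReal_min {f : Ω → ℝ} (hf : Measurable f) {c : ℝ≥0∞}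
    (hc : c < ∫⁻ ω, ENNReal.ofReal (f ω) ∂P) :
    ∃ b : ℕ, c < ∫⁻ ω, ENNReal.ofReal (min (f ω) b) ∂P := by
  have hlim : ∫⁻ ω, ENNReal.ofReal (f ω) ∂P
      = ⨆ b : ℕ, ∫⁻ ω, ENNReal.ofReal (min (f ω) b) ∂P := by
    rw [← lintegral_iSup (fun b => (hf.min measurable_const).ennreal_ofReal)
      fun m n hmn ω => ENNReal.ofReal_le_ofReal (min_le_min le_rfl (by exact_mod_cast hmn))]
    congr with ω
    refine le_antisymm ?_ (iSup_le fun b => ENNReal.ofReal_le_ofReal (min_le_left _ _))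
    exact le_iSup_of_le ⌈f ω⌉₊ (by rw [min_eq_left (Nat.le_ceil _)])
  rwa [hlim, lt_iSup_iff] at hc

lemma exists_mul_lintegral_countingProcess_le (hKm : ∀ i, Measurable (K i))
    (hK : ∀ i ω, 0 ≤ K i ω) (hindep : iIndepFun K P) (hident : ∀ i, IdentDistrib (K i) (K 0) P P)
    {c : ℝ≥0∞} (hc : c < ∫⁻ ω, ENNReal.ofReal (K 0 ω) ∂P) :
    ∃ b : ℕ, ∀ t, 0 ≤ t →
      c * (∫⁻ ω, (countingProcess K t ω : ℝ≥0∞) ∂P + 1) ≤ ENNReal.ofReal (t + b) := by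
  obtain ⟨b, hb⟩ := exists_lt_lintegral_ofReal_min (hKm 0) hc
  have hmin : Measurable fun x : ℝ => min x b := measurable_id.min measurable_const
  refine ⟨b, fun t ht => ?_⟩
  calc c * (∫⁻ ω, (countingProcess K t ω : ℝ≥0∞) ∂P + 1)
      ≤ (∫⁻ ω, ENNReal.ofReal (min (K 0 ω) b) ∂P)
          * (∫⁻ ω, (countingProcess (fun i ω => min (K i ω) b) t ω : ℝ≥0∞) ∂P + 1) := by
        gcongr with ω
        exact countingProcess_anti fun i => min_le_left _ _
    _ ≤ ENNReal.ofReal (t + b) :=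
        mean_mul_lintegral_countingProcess_le (fun i => hmin.comp (hKm i))
          (fun i ω => le_min (hK i ω) b.cast_nonneg) (hindep.comp _ fun _ => hmin)
          (fun i => (hident i).comp hmin) (fun _ _ => min_le_right _ _) ht

lemma lintegral_countingProcess_ne_top (hKm : ∀ i, Measurable (K i))
    (hK : ∀ i ω, 0 ≤ K i ω) (hindep : iIndepFun K P) (hident : ∀ i, IdentDistrib (K i) (K 0) P P)
    (hmean : 0 < ∫⁻ ω, ENNReal.ofReal (K 0 ω) ∂P) (ht : 0 ≤ t) :
    ∫⁻ ω, (countingProcess K t ω : ℝ≥0∞) ∂P ≠ ⊤ := by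
  obtain ⟨c, hc0, hc⟩ := exists_between hmean
  obtain ⟨b, hb⟩ := exists_mul_lintegral_countingProcess_le hKm hK hindep hident hc
  intro htop
  have := (hb t ht).trans_lt ENNReal.ofReal_lt_top
  rw [htop, top_add, ENNReal.mul_top hc0.ne'] at this
  exact lt_irrefl _ this

end Wald

lemma tendsto_div_atTop_of_renewal_bounds {H : ℝ → ℝ} {μ : ℝ} (hμ : 0 < μ)
    (hlow : ∀ t, 0 ≤ t → t ≤ μ * (H t + 1))
    (hup : ∀ c, 0 < c → c < μ → ∃ b : ℝ, ∀ t, 0 ≤ t → c * (H t + 1) ≤ t + b) :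
    Tendsto (fun t => H t / t) atTop (nhds (1 / μ)) := by
  rw [tendsto_order]
  refine ⟨fun a ha => ?_, fun a ha => ?_⟩
  · have hlim : Tendsto (fun t : ℝ => 1 / μ - t⁻¹) atTop (nhds (1 / μ)) := by
      simpa using (tendsto_inv_atTop_zero (𝕜 := ℝ)).const_sub (1 / μ)
    filter_upwards [hlim.eventually (lt_mem_nhds ha), eventually_gt_atTop 0] with t hat ht
    refine hat.trans_le ?_
    rw [le_div_iff₀ ht]
    have := hlow t ht.le
    field_simp
    linarith
  · have ha0 : 0 < a := (one_div_pos.2 hμ).trans ha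
    obtain ⟨c, hac, hcμ⟩ : ∃ c, 1 / a < c ∧ c < μ :=
      exists_between ((one_div_lt ha0 hμ).2 ha)
    have hc : 0 < c := (one_div_pos.2 ha0).trans hac
    obtain ⟨b, hb⟩ := hup c hc hcμ
    have hlim : Tendsto (fun t : ℝ => 1 / c + b / c * t⁻¹) atTop (nhds (1 / c)) := by
      simpa using ((tendsto_inv_atTop_zero (𝕜 := ℝ)).const_mul (b / c)).const_add (1 / c)
    filter_upwards [hlim.eventually (gt_mem_nhds ((one_div_lt ha0 hc).1 hac)),
      eventually_gt_atTop 0] with t hat ht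
    refine lt_of_le_of_lt ?_ hat
    rw [div_le_iff₀ ht]
    have := hb t ht.le
    field_simp
    linarith

theorem elementary_renewal_theorem_general {Ω : Type*} [MeasureSpace Ω]
    (J : ℕ → Ω → ℝ)
    (hmeas : ∀ i, Measurable (J i))
    (hindep : iIndepFun J ℙ)
    (hident : ∀ i, IdentDistrib (J i) (J 0) ℙ ℙ)
    (hpos : ∀ i ω, 0 < J i ω)
    (μ : ℝ) (hμ : μ = ∫ ω, J 0 ω ∂ℙ) (hμ_pos : 0 < μ) :
    Tendsto (fun t : ℝ => renewalFunction J t / t) atTop (nhds (1 / μ)) := by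
  have hJ : ∀ i ω, 0 ≤ J i ω := fun i ω => (hpos i ω).le
  have hmean : ∫⁻ ω, ENNReal.ofReal (J 0 ω) = ENNReal.ofReal μ := by
    rw [hμ, ofReal_integral_eq_lintegral_ofReal
      (Integrable.of_integral_ne_zero (hμ ▸ hμ_pos.ne')) (ae_of_all _ (hJ 0))]
  have hfin : ∀ t, 0 ≤ t → ∫⁻ ω, (countingProcess J t ω : ℝ≥0∞) ≠ ⊤ := fun t ht =>
    lintegral_countingProcess_ne_top hmeas hJ hindep hident
      (by rwa [hmean, ENNReal.ofReal_pos]) ht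
  have hH : ∀ t, 0 ≤ renewalFunction J t + 1 := fun t =>
    add_nonneg ENNReal.toReal_nonneg zero_le_one
  have hreal : ∀ t, 0 ≤ t → ∀ c : ℝ,
      ENNReal.ofReal c * ((∫⁻ ω, (countingProcess J t ω : ℝ≥0∞)) + 1)
        = ENNReal.ofReal (c * (renewalFunction J t + 1)) := fun t ht c => by
    rw [ENNReal.ofReal_mul' (hH t), renewalFunction,
      ENNReal.ofReal_add ENNReal.toReal_nonneg zero_le_one, ENNReal.ofReal_toReal (hfin t ht),
      ENNReal.ofReal_one]
  refine tendsto_div_atTop_of_renewal_bounds hμ_pos (fun t ht => ?_) fun c hc hcμ => ?_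
  · have h := ofReal_le_mean_mul_lintegral_countingProcess hmeas hJ hindep hident ht (hfin t ht)
    rw [hmean, hreal t ht] at h
    exact (ENNReal.ofReal_le_ofReal_iff (mul_nonneg hμ_pos.le (hH t))).1 h
  · obtain ⟨b, hb⟩ := exists_mul_lintegral_countingProcess_le hmeas hJ hindep hident
      (c := ENNReal.ofReal c) (by rwa [hmean, ENNReal.ofReal_lt_ofReal_iff hμ_pos])
    refine ⟨b, fun t ht => ?_⟩
    have h := hb t ht
    rw [hreal t ht] at h
    exact (ENNReal.ofReal_le_ofReal_iff (by positivity)).1 h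

/-- Elementary renewal theorem: if `J_1, J_2, …` are i.i.d. strictly positive
integrable random variables with mean `μ = E[J_1] ∈ (0,∞)` and `H(t) = E[N(t)]`
(finite for every `t`), then `H(t)/t → 1/μ` as `t → ∞`. -/
theorem elementary_renewal_theorem {Ω : Type*} [MeasureSpace Ω]
    [IsProbabilityMeasure (ℙ : Measure Ω)]
    (J : ℕ → Ω → ℝ)
    (hmeas : ∀ i, Measurable (J i))
    (hindep : iIndepFun J ℙ)
    (hident : ∀ i, IdentDistrib (J i) (J 0) ℙ ℙ)
    (hpos : ∀ i ω, 0 < J i ω)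
    (hint : Integrable (J 0) ℙ)
    (μ : ℝ) (hμ : μ = ∫ ω, J 0 ω ∂ℙ) (hμ_pos : 0 < μ)
    (hfin : ∀ t : ℝ, ∫⁻ ω, (countingProcess J t ω : ℝ≥0∞) ∂ℙ ≠ ⊤) :
    Tendsto (fun t : ℝ => renewalFunction J t / t) atTop (nhds (1 / μ)) :=
  elementary_renewal_theorem_general J hmeas hindep hident hpos μ hμ hμ_pos
end
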